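/- arXiv:2605.15916 — 3 statements merged into one kernel-verified Lean document; each statement's English description precedes it below -/
import Mathlib

section
/- If A = XYᵀ with X, Y ∈ ℝ^{d×2r} and I_{2r} − YᵀX is invertible, then the Cayley transform satisfies (I − A)⁻¹(I + A) = I + 2X(I_{2r} − YᵀX)⁻¹Yᵀ. -/
open Matrix

theorem cayley_low_rank_formula {d r : ℕ}
    (X Y : Matrix (Fin d) (Fin (2 * r)) ℝ)
    (h : IsUnit (1 - Yᵀ * X)) :
    (1 - X * Yᵀ)⁻¹ * (1 + X * Yᵀ) = 1 + (2 : ℝ) • (X * (1 - Yᵀ * X)⁻¹ * Yᵀ) := by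
  set B := (1 : Matrix (Fin (2*r)) (Fin (2*r)) ℝ) - Yᵀ * X with hB
  have hBB : B * B⁻¹ = 1 := mul_nonsing_inv _ ((Matrix.isUnit_iff_isUnit_det _).mp h)
  have key : ∀ c : ℝ, X * Yᵀ * (c • (X * B⁻¹ * Yᵀ)) = c • (X * B⁻¹ * Yᵀ) - c • (X * Yᵀ) := by
    intro c
    have : X * B * B⁻¹ * Yᵀ = X * Yᵀ := by
      rw [Matrix.mul_assoc X B, hBB, Matrix.mul_one]
    calc X * Yᵀ * (c • (X * B⁻¹ * Yᵀ)) = c • (X * (Yᵀ * X) * B⁻¹ * Yᵀ) := by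
          simp [Matrix.mul_smul, Matrix.mul_assoc]
      _ = c • (X * (1 - B) * B⁻¹ * Yᵀ) := by rw [hB, sub_sub_cancel]
      _ = c • (X * B⁻¹ * Yᵀ) - c • (X * Yᵀ) := by
          rw [Matrix.mul_sub, Matrix.sub_mul, Matrix.sub_mul, Matrix.mul_one]
          rw [smul_sub, this]
  have hunit : IsUnit (1 - X * Yᵀ) := by
    have hmul : (1 - X * Yᵀ) * (1 + X * B⁻¹ * Yᵀ) = 1 := ?_
    · exact @isUnit_of_invertible _ _ _ (invertibleOfRightInverse _ _ hmul)
    have k1 := key 1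
    simp only [one_smul] at k1
    rw [Matrix.sub_mul, Matrix.mul_add, Matrix.mul_add, Matrix.one_mul, Matrix.one_mul,
      Matrix.mul_one]
    have : (X * Yᵀ) * (X * B⁻¹ * Yᵀ) = X * B⁻¹ * Yᵀ - X * Yᵀ := k1
    rw [this]
    module
  have main : (1 - X * Yᵀ) * (1 + (2 : ℝ) • (X * B⁻¹ * Yᵀ)) = 1 + X * Yᵀ := by
    have k2 := key 2
    rw [Matrix.sub_mul, Matrix.mul_add, Matrix.mul_add, Matrix.one_mul, Matrix.one_mul,
      Matrix.mul_one, k2]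
    module
  have hinv : (1 - X * Yᵀ)⁻¹ * (1 - X * Yᵀ) = 1 :=
    nonsing_inv_mul _ ((Matrix.isUnit_iff_isUnit_det _).mp hunit)
  calc (1 - X * Yᵀ)⁻¹ * (1 + X * Yᵀ)
      = (1 - X * Yᵀ)⁻¹ * ((1 - X * Yᵀ) * (1 + (2 : ℝ) • (X * B⁻¹ * Yᵀ))) := by rw [main]
    _ = 1 + (2 : ℝ) • (X * B⁻¹ * Yᵀ) := by
        rw [← Matrix.mul_assoc, hinv, Matrix.one_mul]
end

section
/- Upper bound of approximation error: let Z₁, …, Zₙ ∈ ℝ^{d×d} be such that each I + Zᵢ is orthogonal and ‖Zᵢ‖_F ≤ γ for all i. Then the first-order parallel approximation R̃ = I + Σᵢ Zᵢ satisfies ‖I − R̃ᵀR̃‖_F ≤ n(n−1)γ². -/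
open Matrix Finset

attribute [local instance] Matrix.frobeniusNormedAddCommGroup

theorem approximation_error_upper_bound {d n : ℕ}
    (Z : Fin n → Matrix (Fin d) (Fin d) ℝ) (γ : ℝ)
    (horth : ∀ i, (1 + Z i)ᵀ * (1 + Z i) = 1)
    (hnorm : ∀ i, ‖Z i‖ ≤ γ) :
    ‖(1 : Matrix (Fin d) (Fin d) ℝ) - (1 + ∑ i, Z i)ᵀ * (1 + ∑ i, Z i)‖ ≤
      n * (n - 1) * γ ^ 2 := by
  rcases Nat.eq_zero_or_pos n with hn | hn
  · subst hn
    simp [horth]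
  have hγ : 0 ≤ γ := le_trans (norm_nonneg _) (hnorm ⟨0, hn⟩)
  -- key identity from orthogonality
  have hkey : ∀ i, (Z i)ᵀ + Z i + (Z i)ᵀ * Z i = 0 := by
    intro i
    have h := horth i
    simp only [transpose_add, transpose_one, mul_add, add_mul, one_mul, mul_one] at h
    linear_combination (norm := abel_nf) h
  set S := ∑ i, Z i with hS
  have hST : Sᵀ + S + ∑ i, (Z i)ᵀ * Z i = 0 := by
    rw [hS, transpose_sum, ← Finset.sum_add_distrib, ← Finset.sum_add_distrib]
    simp [hkey]
  have hexp : (1 : Matrix (Fin d) (Fin d) ℝ) - (1 + S)ᵀ * (1 + S)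
      = -(∑ i, ∑ j ∈ univ \ {i}, (Z i)ᵀ * Z j) := by
    have hSS : Sᵀ * S = ∑ i, ∑ j, (Z i)ᵀ * Z j := by
      rw [hS, transpose_sum, Finset.sum_mul]
      exact Finset.sum_congr rfl fun i _ => Finset.mul_sum _ _ _
    have : ∀ i : Fin n, ∑ j, (Z i)ᵀ * Z j
        = (Z i)ᵀ * Z i + ∑ j ∈ univ \ {i}, (Z i)ᵀ * Z j := by
      intro i
      rw [← Finset.sum_sdiff (Finset.subset_univ {i}), Finset.sum_singleton, add_comm]
    simp only [this, Finset.sum_add_distrib] at hSS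
    have h1 : (1 + S)ᵀ * (1 + S) = 1 + (Sᵀ + S + Sᵀ * S) := by
      rw [transpose_add, transpose_one]
      noncomm_ring
    rw [h1, hSS]
    have h2 := hST
    -- from h2: Sᵀ + S = -∑ (Z i)ᵀ * Z i
    have h3 : Sᵀ + S = -∑ i, (Z i)ᵀ * Z i := by
      linear_combination (norm := abel_nf) h2
    rw [h3]
    abel
  rw [hexp, norm_neg]
  calc ‖∑ i, ∑ j ∈ univ \ {i}, (Z i)ᵀ * Z j‖
      ≤ ∑ i, ∑ j ∈ univ \ {i}, ‖(Z i)ᵀ * Z j‖ := by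
        refine (norm_sum_le _ _).trans (Finset.sum_le_sum fun i _ => norm_sum_le _ _)
    _ ≤ ∑ i : Fin n, ∑ _j ∈ univ \ {i}, γ ^ 2 := by
        refine Finset.sum_le_sum fun i _ => Finset.sum_le_sum fun j _ => ?_
        calc ‖(Z i)ᵀ * Z j‖ ≤ ‖(Z i)ᵀ‖ * ‖Z j‖ := Matrix.frobenius_norm_mul _ _
          _ ≤ γ * γ := by
              rw [Matrix.frobenius_norm_transpose]
              exact mul_le_mul (hnorm i) (hnorm j) (norm_nonneg _) hγ
          _ = γ ^ 2 := (sq γ).symm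
    _ = n * (n - 1) * γ ^ 2 := by
        simp only [Finset.sum_const, Finset.card_sdiff_of_subset (Finset.subset_univ _),
          Finset.card_univ, Fintype.card_fin, Finset.card_singleton, nsmul_eq_mul]
        rw [Nat.cast_sub hn]
        push_cast
        ring
end

section
/- If ‖Zᵢ‖_F ≤ γ for each i = 1,…,n and each I + Zᵢ is orthogonal, then for every vector x, the norm distortion of R̃ = I + Σᵢ Zᵢ is bounded: | ‖R̃x‖² − ‖x‖² | ≤ n(n−1)γ² ‖x‖². -/
open Matrix Finset

attribute [local instance] Matrix.frobeniusNormedAddCommGroup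

/-!
Orthogonality of `1 + Zᵢ` says `Zᵢᵀ + Zᵢ + ZᵢᵀZᵢ = 0`, so in `R̃ᵀR̃ - 1` all the terms that are
linear in a single `Zᵢ` cancel against the diagonal products, leaving `∑_{i ≠ j} ZᵢᵀZⱼ`, whose
Frobenius norm is at most `n(n-1)γ²`. Then `‖R̃x‖² - ‖x‖² = xᵀ(R̃ᵀR̃ - 1)x` is bounded by
Cauchy–Schwarz and `‖Mx‖ ≤ ‖M‖_F ‖x‖`.
-/

theorem star_one_add_sum_mul_one_add_sum_sub_one {R ι : Type*} [Ring R] [StarRing R] [Fintype ι]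
    [DecidableEq ι] (z : ι → R) (hz : ∀ i, star (1 + z i) * (1 + z i) = 1) :
    star (1 + ∑ i, z i) * (1 + ∑ i, z i) - 1 = ∑ i, ∑ j ∈ univ.erase i, star (z i) * z j := by
  have hdiag : ∀ i, star (z i) + z i + star (z i) * z i = 0 := fun i => by
    simpa only [star_add, star_one, add_mul, mul_add, one_mul, mul_one, add_assoc, add_eq_left]
      using hz i
  have hsq : star (∑ i, z i) * ∑ i, z i
      = ∑ i, (star (z i) * z i + ∑ j ∈ univ.erase i, star (z i) * z j) := by
    rw [star_sum, sum_mul]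
    exact sum_congr rfl fun i _ => by
      rw [mul_sum, add_sum_erase _ (fun j => star (z i) * z j) (mem_univ i)]
  calc _ = ∑ i, (star (z i) + z i + star (z i) * z i)
        + ∑ i, ∑ j ∈ univ.erase i, star (z i) * z j := by
        rw [star_add, star_one, add_mul, mul_add, mul_add, hsq, sum_add_distrib, sum_add_distrib,
          star_sum]
        simp only [one_mul, mul_one, sum_add_distrib]
        abel
    _ = _ := by simp only [hdiag, sum_const_zero, zero_add]

theorem sum_sum_erase_const {ι R : Type*} [Fintype ι] [DecidableEq ι] [Ring R] (c : R) :
    ∑ i : ι, ∑ _j ∈ univ.erase i, c = Fintype.card ι * (Fintype.card ι - 1) * c := by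
  rcases isEmpty_or_nonempty ι with hι | ⟨⟨i₀⟩⟩
  · simp
  simp only [sum_const, card_erase_of_mem (mem_univ _), card_univ, nsmul_eq_mul,
    Nat.cast_sub (Fintype.card_pos_iff.2 ⟨i₀⟩), Nat.cast_one]
  exact (mul_assoc _ _ _).symm

theorem dotProduct_mulVec_mulVec {m n R : Type*} [Fintype m] [Fintype n] [CommSemiring R]
    (A : Matrix m n R) (x y : n → R) : A *ᵥ x ⬝ᵥ A *ᵥ y = x ⬝ᵥ (Aᵀ * A) *ᵥ y := by
  rw [← mulVec_mulVec, dotProduct_mulVec x, vecMul_transpose]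

theorem frobenius_norm_toLp_mulVec_le {m n 𝕜 : Type*} [Fintype m] [Fintype n] [RCLike 𝕜]
    (A : Matrix m n 𝕜) (x : n → 𝕜) : ‖WithLp.toLp 2 (A *ᵥ x)‖ ≤ ‖A‖ * ‖WithLp.toLp 2 x‖ := by
  rw [← frobenius_norm_replicateCol (ι := Unit), ← frobenius_norm_replicateCol (ι := Unit),
    replicateCol_mulVec]
  exact frobenius_norm_mul _ _

theorem abs_dotProduct_mulVec_le {n : Type*} [Fintype n] (A : Matrix n n ℝ) (x : n → ℝ) :
    |x ⬝ᵥ A *ᵥ x| ≤ ‖A‖ * (x ⬝ᵥ x) := by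
  have hx : x ⬝ᵥ x = ‖WithLp.toLp 2 x‖ ^ 2 := by
    rw [EuclideanSpace.real_norm_sq_eq]; simp [dotProduct, sq]
  have hinner : x ⬝ᵥ A *ᵥ x = inner ℝ (WithLp.toLp 2 (A *ᵥ x)) (WithLp.toLp 2 x) := by
    simp [EuclideanSpace.inner_eq_star_dotProduct]
  calc |x ⬝ᵥ A *ᵥ x| ≤ ‖WithLp.toLp 2 (A *ᵥ x)‖ * ‖WithLp.toLp 2 x‖ := by
        rw [hinner]; exact abs_real_inner_le_norm _ _
    _ ≤ ‖A‖ * ‖WithLp.toLp 2 x‖ * ‖WithLp.toLp 2 x‖ := by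
        gcongr; exact frobenius_norm_toLp_mulVec_le A x
    _ = ‖A‖ * (x ⬝ᵥ x) := by rw [hx]; ring

theorem norm_distortion_bound {d n : ℕ}
    (Z : Fin n → Matrix (Fin d) (Fin d) ℝ) (γ : ℝ)
    (horth : ∀ i, (1 + Z i)ᵀ * (1 + Z i) = 1)
    (hnorm : ∀ i, ‖Z i‖ ≤ γ)
    (x : Fin d → ℝ) :
    |((1 + ∑ i, Z i).mulVec x ⬝ᵥ (1 + ∑ i, Z i).mulVec x) - x ⬝ᵥ x| ≤
      n * (n - 1) * γ ^ 2 * (x ⬝ᵥ x) := by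
  have hstar : ∀ i, star (1 + Z i) * (1 + Z i) = 1 := fun i => by
    rw [star_eq_conjTranspose, conjTranspose_eq_transpose_of_trivial, horth]
  have hgram := star_one_add_sum_mul_one_add_sum_sub_one Z hstar
  rw [star_eq_conjTranspose, conjTranspose_eq_transpose_of_trivial] at hgram
  have hpair : ∀ i j, ‖(Z i)ᵀ * Z j‖ ≤ γ ^ 2 := fun i j =>
    calc ‖(Z i)ᵀ * Z j‖ ≤ ‖Z i‖ * ‖Z j‖ := by
          simpa only [frobenius_norm_transpose] using frobenius_norm_mul (Z i)ᵀ (Z j)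
      _ ≤ γ ^ 2 := by
          rw [sq]
          exact mul_le_mul (hnorm i) (hnorm j) (norm_nonneg _) ((norm_nonneg _).trans (hnorm i))
  calc _ = |x ⬝ᵥ ((1 + ∑ i, Z i)ᵀ * (1 + ∑ i, Z i) - 1) *ᵥ x| := by
        rw [dotProduct_mulVec_mulVec, sub_mulVec, dotProduct_sub, one_mulVec]
    _ ≤ ‖(1 + ∑ i, Z i)ᵀ * (1 + ∑ i, Z i) - 1‖ * (x ⬝ᵥ x) := abs_dotProduct_mulVec_le _ x
    _ ≤ (∑ i, ∑ _j ∈ univ.erase i, γ ^ 2) * (x ⬝ᵥ x) := by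
        gcongr
        · exact dotProduct_self_star_nonneg x
        rw [hgram]
        exact (norm_sum_le _ _).trans (sum_le_sum fun i _ =>
          (norm_sum_le _ _).trans (sum_le_sum fun j _ => hpair i j))
    _ = n * (n - 1) * γ ^ 2 * (x ⬝ᵥ x) := by rw [sum_sum_erase_const, Fintype.card_fin]
end
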